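/- arXiv:2209.11893 — 6 statements merged into one kernel-verified Lean document; each statement's English description precedes it below -/
import Mathlib

section
/- Let D ∈ ℂ[X] and let (p, q) and (p̃, q̃) be two nontrivial solutions of the Pell equation for D. Then there exists a nonzero real constant c such that p′·q̃ = c·p̃′·q; that is, the rational function p′/q is determined by D up to multiplication by a nonzero real constant, independently of the chosen nontrivial solution. -/
open Polynomial

/-- A "positive" nontrivial solution of the Pell equation: the leading
coefficients are compatible with the chosen square root `σ` of the leading
coefficient of `D`. -/
def PellPosSol (D : ℂ[X]) (σ : ℂ) (a b : ℂ[X]) : Prop :=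
  a ^ 2 - b ^ 2 * D = 1 ∧ b ≠ 0 ∧ a.leadingCoeff = σ * b.leadingCoeff

theorem pell_deg (D p q : ℂ[X]) (hD : D.natDegree ≠ 0)
    (hpq : p ^ 2 - q ^ 2 * D = 1) (hq : q ≠ 0) :
    p.natDegree ≠ 0 ∧ 2 * p.natDegree = 2 * q.natDegree + D.natDegree ∧
      p.leadingCoeff ^ 2 = q.leadingCoeff ^ 2 * D.leadingCoeff := by
  have hD0 : D ≠ 0 := fun h => hD (by simp [h])
  have heq : q ^ 2 * D = p ^ 2 - 1 := by linear_combination -hpq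
  have hndqD : (q ^ 2 * D).natDegree = 2 * q.natDegree + D.natDegree := by
    rw [natDegree_mul (pow_ne_zero _ hq) hD0, natDegree_pow]
  have hsub : (p ^ 2 - 1).natDegree = (p ^ 2).natDegree := by
    have h1 : (p ^ 2 - C 1).natDegree = (p ^ 2).natDegree := natDegree_sub_C
    simpa using h1
  have hnp : p.natDegree ≠ 0 := by
    intro h0
    rw [heq, hsub, natDegree_pow, h0] at hndqD
    omega
  have hdeg : 2 * p.natDegree = 2 * q.natDegree + D.natDegree := by
    rw [heq, hsub, natDegree_pow] at hndqD
    omega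
  refine ⟨hnp, hdeg, ?_⟩
  have hc : (p ^ 2).coeff (2 * p.natDegree) - (q ^ 2 * D).coeff (2 * p.natDegree)
      = (1 : ℂ[X]).coeff (2 * p.natDegree) := by rw [← coeff_sub, hpq]
  have h1 : (1 : ℂ[X]).coeff (2 * p.natDegree) = 0 := by
    rw [Polynomial.coeff_one, if_neg (by omega)]
  have h2 : (p ^ 2).coeff (2 * p.natDegree) = p.leadingCoeff ^ 2 := by
    rw [show 2 * p.natDegree = (p ^ 2).natDegree by rw [natDegree_pow]]
    rw [coeff_natDegree, leadingCoeff_pow]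
  have h3 : (q ^ 2 * D).coeff (2 * p.natDegree) = q.leadingCoeff ^ 2 * D.leadingCoeff := by
    rw [show 2 * p.natDegree = (q ^ 2).natDegree + D.natDegree by rw [natDegree_pow]; omega]
    rw [coeff_mul_degree_add_degree, leadingCoeff_pow]
  rw [h1, h2, h3] at hc
  linear_combination hc

theorem pell_mul (D : ℂ[X]) (σ : ℂ) (hD : D.natDegree ≠ 0) (hσ : σ ^ 2 = D.leadingCoeff)
    (a b c d : ℂ[X]) (hab : PellPosSol D σ a b) (hcd : PellPosSol D σ c d) :
    PellPosSol D σ (a * c + b * d * D) (a * d + b * c) ∧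
      (a * c + b * d * D).natDegree = a.natDegree + c.natDegree := by
  obtain ⟨h1, hb, hlab⟩ := hab
  obtain ⟨h2, hd, hlcd⟩ := hcd
  have hD0 : D ≠ 0 := fun h => hD (by simp [h])
  have hσ0 : σ ≠ 0 := by
    intro h
    rw [h] at hσ
    exact hD0 (leadingCoeff_eq_zero.mp (by simpa using hσ.symm))
  obtain ⟨hna, hda, _⟩ := pell_deg D a b hD h1 hb
  obtain ⟨hnc, hdc, _⟩ := pell_deg D c d hD h2 hd
  have hlb : b.leadingCoeff ≠ 0 := leadingCoeff_ne_zero.mpr hb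
  have hld : d.leadingCoeff ≠ 0 := leadingCoeff_ne_zero.mpr hd
  set N := a.natDegree + c.natDegree with hN
  have e1 : (a * c).coeff N = a.leadingCoeff * c.leadingCoeff := coeff_mul_degree_add_degree a c
  have e2 : (b * d * D).coeff N = b.leadingCoeff * d.leadingCoeff * D.leadingCoeff := by
    rw [show N = (b * d).natDegree + D.natDegree by rw [natDegree_mul hb hd]; omega]
    rw [coeff_mul_degree_add_degree, leadingCoeff_mul]
  have cA : (a * c + b * d * D).coeff N = 2 * σ ^ 2 * (b.leadingCoeff * d.leadingCoeff) := by
    rw [coeff_add, e1, e2, hlab, hlcd, ← hσ]; ring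
  have cA0 : (a * c + b * d * D).coeff N ≠ 0 := by
    rw [cA]
    exact mul_ne_zero (by simp [hσ0]) (mul_ne_zero hlb hld)
  have ndA_le : (a * c + b * d * D).natDegree ≤ N := by
    refine natDegree_add_le_of_degree_le natDegree_mul_le ?_
    calc (b * d * D).natDegree ≤ (b * d).natDegree + D.natDegree := natDegree_mul_le
      _ ≤ b.natDegree + d.natDegree + D.natDegree := by
          have := natDegree_mul_le (p := b) (q := d); omega
      _ = N := by omega
  have ndA : (a * c + b * d * D).natDegree = N :=
    le_antisymm ndA_le (le_natDegree_of_ne_zero cA0)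
  have lcA : (a * c + b * d * D).leadingCoeff = 2 * σ ^ 2 * (b.leadingCoeff * d.leadingCoeff) := by
    rw [leadingCoeff, ndA, cA]
  set M := a.natDegree + d.natDegree with hM
  have hMbc : M = b.natDegree + c.natDegree := by omega
  have f1 : (a * d).coeff M = a.leadingCoeff * d.leadingCoeff := coeff_mul_degree_add_degree a d
  have f2 : (b * c).coeff M = b.leadingCoeff * c.leadingCoeff := by
    rw [hMbc]; exact coeff_mul_degree_add_degree b c
  have cB : (a * d + b * c).coeff M = 2 * σ * (b.leadingCoeff * d.leadingCoeff) := by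
    rw [coeff_add, f1, f2, hlab, hlcd]; ring
  have cB0 : (a * d + b * c).coeff M ≠ 0 := by
    rw [cB]
    exact mul_ne_zero (by simp [hσ0]) (mul_ne_zero hlb hld)
  have hB0 : a * d + b * c ≠ 0 := fun h => cB0 (by simp [h])
  have ndB_le : (a * d + b * c).natDegree ≤ M := by
    refine natDegree_add_le_of_degree_le natDegree_mul_le ?_
    calc (b * c).natDegree ≤ b.natDegree + c.natDegree := natDegree_mul_le
      _ = M := hMbc.symm
  have ndB : (a * d + b * c).natDegree = M :=
    le_antisymm ndB_le (le_natDegree_of_ne_zero cB0)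
  have lcB : (a * d + b * c).leadingCoeff = 2 * σ * (b.leadingCoeff * d.leadingCoeff) := by
    rw [leadingCoeff, ndB, cB]
  refine ⟨⟨by linear_combination (c ^ 2 - d ^ 2 * D) * h1 + h2, hB0, ?_⟩, ndA⟩
  rw [lcA, lcB]; ring

theorem pell_der (D a b : ℂ[X]) (h : a ^ 2 - b ^ 2 * D = 1) :
    2 * a * derivative a = 2 * b * derivative b * D + b ^ 2 * derivative D := by
  have := congrArg derivative h
  simp only [derivative_sub, derivative_mul, derivative_pow, derivative_one,
    Nat.cast_ofNat, map_ofNat] at this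
  linear_combination this

theorem pell_logder (D a b c d : ℂ[X]) (h1 : a ^ 2 - b ^ 2 * D = 1)
    (h2 : c ^ 2 - d ^ 2 * D = 1) :
    derivative (a * c + b * d * D) * (b * d)
      = (derivative a * d + derivative c * b) * (a * d + b * c) := by
  have g1 := pell_der D a b h1
  have g2 := pell_der D c d h2
  have key : 2 * (derivative (a * c + b * d * D) * (b * d))
      = 2 * ((derivative a * d + derivative c * b) * (a * d + b * c)) := by
    simp only [derivative_add, derivative_mul]
    linear_combination -(d ^ 2 * g1 + b ^ 2 * g2)
  exact mul_left_cancel₀ two_ne_zero key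

noncomputable def pellPow (D p q : ℂ[X]) : ℕ → ℂ[X] × ℂ[X]
  | 0 => (1, 0)
  | n + 1 =>
    ((pellPow D p q n).1 * p + (pellPow D p q n).2 * q * D,
     (pellPow D p q n).1 * q + (pellPow D p q n).2 * p)

theorem pellPow_posSol (D : ℂ[X]) (σ : ℂ) (hD : D.natDegree ≠ 0)
    (hσ : σ ^ 2 = D.leadingCoeff) (p q : ℂ[X]) (hpq : PellPosSol D σ p q) :
    ∀ n, 1 ≤ n → PellPosSol D σ (pellPow D p q n).1 (pellPow D p q n).2 ∧
      (pellPow D p q n).1.natDegree = n * p.natDegree := by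
  intro n hn
  induction n with
  | zero => omega
  | succ m ih =>
    rcases Nat.eq_or_lt_of_le hn with h1 | h1
    · have hm : m = 0 := by omega
      subst hm
      constructor
      · show PellPosSol D σ (1 * p + 0 * q * D) (1 * q + 0 * p)
        simpa using hpq
      · show (1 * p + 0 * q * D).natDegree = 1 * p.natDegree
        simp
    · have hm : 1 ≤ m := by omega
      obtain ⟨hps, hdeg⟩ := ih hm
      obtain ⟨hps', hdeg'⟩ := pell_mul D σ hD hσ _ _ _ _ hps hpq
      refine ⟨hps', ?_⟩
      show ((pellPow D p q m).1 * p + (pellPow D p q m).2 * q * D).natDegree = (m + 1) * p.natDegree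
      rw [hdeg', hdeg]; ring

theorem pellPow_der (D : ℂ[X]) (σ : ℂ) (hD : D.natDegree ≠ 0)
    (hσ : σ ^ 2 = D.leadingCoeff) (p q : ℂ[X]) (hpq : PellPosSol D σ p q) :
    ∀ n, 1 ≤ n → derivative (pellPow D p q n).1 * q
      = C (n : ℂ) * derivative p * (pellPow D p q n).2 := by
  intro n hn
  induction n with
  | zero => omega
  | succ m ih =>
    rcases Nat.eq_or_lt_of_le hn with h1 | h1
    · have hm : m = 0 := by omega
      subst hm
      show derivative (1 * p + 0 * q * D) * q = C ((1 : ℕ) : ℂ) * derivative p * (1 * q + 0 * p)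
      simp
    · have hm : 1 ≤ m := by omega
      have ihm := ih hm
      obtain ⟨⟨hsol, hB, _⟩, _⟩ := pellPow_posSol D σ hD hσ p q hpq m hm
      set A := (pellPow D p q m).1
      set B := (pellPow D p q m).2
      have key := pell_logder D A B p q hsol hpq.1
      have goal2 : (derivative (pellPow D p q (m+1)).1 * q) * B
          = (C ((m + 1 : ℕ) : ℂ) * derivative p * (pellPow D p q (m+1)).2) * B := by
        show (derivative (A * p + B * q * D) * q) * B = _
        calc (derivative (A * p + B * q * D) * q) * B
            = derivative (A * p + B * q * D) * (B * q) := by ring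
          _ = (derivative A * q + derivative p * B) * (A * q + B * p) := key
          _ = (C ((m : ℕ) : ℂ) * derivative p * B + derivative p * B) * (A * q + B * p) := by
              rw [ihm]
          _ = (C ((m + 1 : ℕ) : ℂ) * derivative p * (pellPow D p q (m+1)).2) * B := by
              show _ = (C ((m + 1 : ℕ) : ℂ) * derivative p * (A * q + B * p)) * B
              push_cast
              rw [C_add, C_1]
              ring
      exact mul_right_cancel₀ hB goal2

-- If two positive solutions of the same degree were "independent", leading
-- coefficient analysis of the quotient gives a sign.
theorem pell_quot_lc (D : ℂ[X]) (σ : ℂ) (hD : D.natDegree ≠ 0)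
    (hσ : σ ^ 2 = D.leadingCoeff) (p₁ q₁ p₂ q₂ : ℂ[X])
    (h1 : PellPosSol D σ p₁ q₁) (h2 : PellPosSol D σ p₂ q₂)
    (hdeq : p₁.natDegree = p₂.natDegree)
    (hQ : q₁ * p₂ - p₁ * q₂ ≠ 0) :
    (p₁ * p₂ - q₁ * q₂ * D).leadingCoeff = -σ * (q₁ * p₂ - p₁ * q₂).leadingCoeff := by
  obtain ⟨hp1, hq1, hl1⟩ := h1
  obtain ⟨hp2, hq2, hl2⟩ := h2
  have hD0 : D ≠ 0 := fun h => hD (by simp [h])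
  have hσ0 : σ ≠ 0 := by
    intro h; rw [h] at hσ
    exact hD0 (leadingCoeff_eq_zero.mp (by simpa using hσ.symm))
  obtain ⟨hn1, hd1, _⟩ := pell_deg D p₁ q₁ hD hp1 hq1
  obtain ⟨hn2, hd2, _⟩ := pell_deg D p₂ q₂ hD hp2 hq2
  obtain ⟨⟨hRS, hS0, hlRS⟩, hnR⟩ := pell_mul D σ hD hσ p₁ q₁ p₂ q₂ ⟨hp1, hq1, hl1⟩ ⟨hp2, hq2, hl2⟩
  obtain ⟨hnRne, hdR, _⟩ := pell_deg D _ _ hD hRS hS0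
  set P := p₁ * p₂ - q₁ * q₂ * D with hPdef
  set Q := q₁ * p₂ - p₁ * q₂ with hQdef
  set R := p₁ * p₂ + q₁ * q₂ * D with hRdef
  set S := p₁ * q₂ + q₁ * p₂ with hSdef
  have hPQ : P ^ 2 - Q ^ 2 * D = 1 := by
    rw [hPdef, hQdef]; linear_combination (p₂ ^ 2 - q₂ ^ 2 * D) * hp1 + hp2
  -- degree of P
  have hQD : (Q ^ 2 * D).natDegree = 2 * Q.natDegree + D.natDegree := by
    rw [natDegree_mul (pow_ne_zero _ hQ) hD0, natDegree_pow]
  have hQDpos : 0 < (Q ^ 2 * D).natDegree := by omega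
  have hPsq : P ^ 2 = 1 + Q ^ 2 * D := by linear_combination hPQ
  have hnP2 : (P ^ 2).natDegree = 2 * Q.natDegree + D.natDegree := by
    rw [hPsq, natDegree_add_eq_right_of_natDegree_lt (by simpa using hQDpos), hQD]
  have hP0 : P ≠ 0 := by
    intro h
    rw [h] at hnP2
    simp at hnP2
    omega
  have hdP : 2 * P.natDegree = 2 * Q.natDegree + D.natDegree := by
    rw [← hnP2, natDegree_pow]
  -- the cross identity
  have cross : P * R + Q * S * D = p₁ ^ 2 + q₁ ^ 2 * D := by
    rw [hPdef, hQdef, hRdef, hSdef]; linear_combination (p₁ ^ 2 + q₁ ^ 2 * D) * hp2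
  set N := P.natDegree + R.natDegree with hNdef
  have hNalt : N = (Q * S).natDegree + D.natDegree := by
    rw [natDegree_mul hQ hS0]; omega
  have c1 : (P * R).coeff N = P.leadingCoeff * R.leadingCoeff := coeff_mul_degree_add_degree P R
  have c2 : (Q * S * D).coeff N = Q.leadingCoeff * S.leadingCoeff * D.leadingCoeff := by
    rw [hNalt, coeff_mul_degree_add_degree]
    rw [leadingCoeff_mul]
  have c3 : (p₁ ^ 2 + q₁ ^ 2 * D).coeff N = 0 := by
    apply coeff_eq_zero_of_natDegree_lt
    have b1 : (p₁ ^ 2).natDegree ≤ 2 * p₁.natDegree := by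
      rw [natDegree_pow]
    have b2 : (q₁ ^ 2 * D).natDegree ≤ 2 * p₁.natDegree := by
      calc (q₁ ^ 2 * D).natDegree ≤ (q₁ ^ 2).natDegree + D.natDegree := natDegree_mul_le
        _ ≤ 2 * p₁.natDegree := by rw [natDegree_pow]; omega
    have hb : (p₁ ^ 2 + q₁ ^ 2 * D).natDegree ≤ 2 * p₁.natDegree :=
      natDegree_add_le_of_degree_le b1 b2
    have hNbig : 2 * p₁.natDegree < N := by
      have hPpos : 1 ≤ P.natDegree := by omega
      omega
    omega
  have hcoeff : (P * R).coeff N + (Q * S * D).coeff N = 0 := by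
    rw [← coeff_add, cross, c3]
  rw [c1, c2] at hcoeff
  have hlS : S.leadingCoeff ≠ 0 := leadingCoeff_ne_zero.mpr hS0
  rw [hlRS, ← hσ] at hcoeff
  -- P.lc * (σ * S.lc) + Q.lc * S.lc * σ^2 = 0
  have : σ * S.leadingCoeff * (P.leadingCoeff + σ * Q.leadingCoeff) = 0 := by
    linear_combination hcoeff
  rcases mul_eq_zero.mp this with h | h
  · rcases mul_eq_zero.mp h with h' | h'
    · exact absurd h' hσ0
    · exact absurd h' hlS
  · linear_combination h

theorem pell_unique (D : ℂ[X]) (σ : ℂ) (hD : D.natDegree ≠ 0)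
    (hσ : σ ^ 2 = D.leadingCoeff) (p₁ q₁ p₂ q₂ : ℂ[X])
    (h1 : PellPosSol D σ p₁ q₁) (h2 : PellPosSol D σ p₂ q₂)
    (hdeq : p₁.natDegree = p₂.natDegree) :
    (p₂ = p₁ ∧ q₂ = q₁) ∨ (p₂ = -p₁ ∧ q₂ = -q₁) := by
  have hD0 : D ≠ 0 := fun h => hD (by simp [h])
  obtain ⟨hp1, hq1, hl1⟩ := h1
  obtain ⟨hp2, hq2, hl2⟩ := h2
  have hQ : q₁ * p₂ - p₁ * q₂ = 0 := by
    by_contra hQ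
    have h12 := pell_quot_lc D σ hD hσ p₁ q₁ p₂ q₂ ⟨hp1, hq1, hl1⟩ ⟨hp2, hq2, hl2⟩ hdeq hQ
    have hQ' : q₂ * p₁ - p₂ * q₁ ≠ 0 := by
      intro h; apply hQ; linear_combination -h
    have h21 := pell_quot_lc D σ hD hσ p₂ q₂ p₁ q₁ ⟨hp2, hq2, hl2⟩ ⟨hp1, hq1, hl1⟩ hdeq.symm hQ'
    have e1 : p₂ * p₁ - q₂ * q₁ * D = p₁ * p₂ - q₁ * q₂ * D := by ring
    have e2 : q₂ * p₁ - p₂ * q₁ = -(q₁ * p₂ - p₁ * q₂) := by ring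
    rw [e1, e2, leadingCoeff_neg] at h21
    have hlQ : (q₁ * p₂ - p₁ * q₂).leadingCoeff ≠ 0 := leadingCoeff_ne_zero.mpr hQ
    have hσ0 : σ ≠ 0 := by
      intro h; rw [h] at hσ
      exact hD0 (leadingCoeff_eq_zero.mp (by simpa using hσ.symm))
    have : 2 * σ * (q₁ * p₂ - p₁ * q₂).leadingCoeff = 0 := by
      linear_combination h12 - h21
    rcases mul_eq_zero.mp this with h | h
    · rcases mul_eq_zero.mp h with h' | h'
      · norm_num at h'
      · exact hσ0 h'
    · exact hlQ h
  -- now q₁ p₂ = p₁ q₂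
  have hco1 : IsCoprime q₁ p₁ := ⟨-(q₁ * D), p₁, by linear_combination hp1⟩
  have hco2 : IsCoprime q₂ p₂ := ⟨-(q₂ * D), p₂, by linear_combination hp2⟩
  have hd12 : q₁ ∣ q₂ := by
    refine hco1.dvd_of_dvd_mul_left ?_
    exact ⟨p₂, by linear_combination -hQ⟩
  have hd21 : q₂ ∣ q₁ := by
    refine hco2.dvd_of_dvd_mul_left ?_
    exact ⟨p₁, by linear_combination hQ⟩
  obtain ⟨u, hu⟩ := (associated_of_dvd_dvd hd12 hd21)
  obtain ⟨r, hr, hCr⟩ := Polynomial.isUnit_iff.mp u.isUnit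
  have hq2eq : q₂ = q₁ * C r := by rw [hCr, hu]
  have hp2eq : p₂ = C r * p₁ := by
    have : q₁ * p₂ = q₁ * (C r * p₁) := by
      rw [show q₁ * p₂ = p₁ * q₂ by linear_combination hQ, hq2eq]; ring
    exact mul_left_cancel₀ hq1 this
  have hr2 : (C r : ℂ[X]) ^ 2 = 1 := by
    have hA : (C r * p₁) ^ 2 - (q₁ * C r) ^ 2 * D = 1 := by rw [← hp2eq, ← hq2eq]; exact hp2
    linear_combination hA - (C r : ℂ[X]) ^ 2 * hp1
  have hr2' : r ^ 2 = 1 := by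
    have : (C (r ^ 2) : ℂ[X]) = C 1 := by rw [map_pow, map_one]; exact hr2
    exact C_injective this
  have : (r - 1) * (r + 1) = 0 := by linear_combination hr2'
  rcases mul_eq_zero.mp this with h | h
  · left
    have : r = 1 := by linear_combination h
    subst this
    constructor
    · rw [hp2eq, map_one, one_mul]
    · rw [hq2eq, map_one, mul_one]
  · right
    have : r = -1 := by linear_combination h
    subst this
    constructor
    · rw [hp2eq, map_neg, map_one]; ring
    · rw [hq2eq, map_neg, map_one]; ring

-- constant D: every solution has constant p
theorem pell_const (a : ℂ) (p q : ℂ[X]) (hpq : p ^ 2 - q ^ 2 * C a = 1) :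
    derivative p = 0 := by
  obtain ⟨b, hb⟩ : ∃ b : ℂ, b ^ 2 = a := by
    have := IsAlgClosed.exists_pow_nat_eq a (n := 2) (by norm_num)
    simpa using this
  have hfac : (p - C b * q) * (p + C b * q) = 1 := by
    have : (C b) ^ 2 = C a := by rw [← map_pow, hb]
    linear_combination hpq - q ^ 2 * this
  obtain ⟨r, _, hr⟩ := Polynomial.isUnit_iff.mp (IsUnit.of_mul_eq_one _ hfac)
  obtain ⟨s, _, hs⟩ := Polynomial.isUnit_iff.mp
    (IsUnit.of_mul_eq_one _ (by rw [mul_comm] at hfac; exact hfac))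
  have h2p : 2 * p = C r + C s := by
    rw [hr, hs]; ring
  have := congrArg derivative h2p
  simp only [derivative_mul, derivative_add, derivative_C, derivative_ofNat, add_zero] at this
  have h2 : (2 : ℂ[X]) * derivative p = 0 := by linear_combination this
  rcases mul_eq_zero.mp h2 with h | h
  · norm_num at h
  · exact h

-- Core result for positive solutions
theorem pell_main_pos (D : ℂ[X]) (σ : ℂ) (hD : D.natDegree ≠ 0)
    (hσ : σ ^ 2 = D.leadingCoeff) (p q pt qt : ℂ[X])
    (h1 : PellPosSol D σ p q) (h2 : PellPosSol D σ pt qt) :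
    ∃ c : ℝ, c ≠ 0 ∧ derivative p * qt = C (c : ℂ) * (derivative pt * q) := by
  obtain ⟨hm0, _, _⟩ := pell_deg D p q hD h1.1 h1.2.1
  obtain ⟨hmt0, _, _⟩ := pell_deg D pt qt hD h2.1 h2.2.1
  set m := p.natDegree with hmdef
  set mt := pt.natDegree with hmtdef
  have hm : 1 ≤ mt := by omega
  have hm' : 1 ≤ m := by omega
  obtain ⟨psA, degA⟩ := pellPow_posSol D σ hD hσ p q h1 mt hm
  obtain ⟨psB, degB⟩ := pellPow_posSol D σ hD hσ pt qt h2 m hm'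
  set A := pellPow D p q mt with hA
  set B := pellPow D pt qt m with hB
  have hdeq : A.1.natDegree = B.1.natDegree := by rw [degA, degB]; ring
  have derA := pellPow_der D σ hD hσ p q h1 mt hm
  have derB := pellPow_der D σ hD hσ pt qt h2 m hm'
  have hA2 : A.2 ≠ 0 := psA.2.1
  -- unify the two sign cases
  have derB' : derivative A.1 * qt = C (m : ℂ) * derivative pt * A.2 := by
    rcases pell_unique D σ hD hσ A.1 A.2 B.1 B.2 psA psB hdeq with ⟨e1, e2⟩ | ⟨e1, e2⟩
    · rw [e1, e2] at derB; exact derB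
    · rw [e1, e2, derivative_neg] at derB
      linear_combination -derB
  -- combine
  have key : (C ((mt : ℕ) : ℂ) * (derivative p * qt)) * A.2
      = (C ((m : ℕ) : ℂ) * (derivative pt * q)) * A.2 := by
    calc (C ((mt : ℕ) : ℂ) * (derivative p * qt)) * A.2
        = (C ((mt : ℕ) : ℂ) * derivative p * A.2) * qt := by ring
      _ = (derivative A.1 * q) * qt := by rw [derA]
      _ = (derivative A.1 * qt) * q := by ring
      _ = (C ((m : ℕ) : ℂ) * derivative pt * A.2) * q := by rw [derB']
      _ = (C ((m : ℕ) : ℂ) * (derivative pt * q)) * A.2 := by ring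
  have key2 : C ((mt : ℕ) : ℂ) * (derivative p * qt) = C ((m : ℕ) : ℂ) * (derivative pt * q) :=
    mul_right_cancel₀ hA2 key
  refine ⟨(m : ℝ) / (mt : ℝ), ?_, ?_⟩
  · apply div_ne_zero <;> · simp only [ne_eq, Nat.cast_eq_zero]; omega
  · have hmtne : ((mt : ℕ) : ℂ) ≠ 0 := by
      simp only [ne_eq, Nat.cast_eq_zero]; omega
    have hCmt : (C ((mt : ℕ) : ℂ)) ≠ 0 := by simpa using hmtne
    apply mul_left_cancel₀ hCmt
    rw [show C ((mt:ℕ):ℂ) * (derivative p * qt) = C ((mt : ℕ) : ℂ) * (derivative p * qt) from rfl, key2]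
    have hcc : C ((mt : ℕ) : ℂ) * C ((((m : ℝ) / (mt : ℝ)) : ℝ) : ℂ) = C ((m : ℕ) : ℂ) := by
      rw [← map_mul]
      congr 1
      push_cast
      field_simp
    linear_combination -(derivative pt * q) * hcc

/-- For any two nontrivial solutions `(p, q)` and `(p̃, q̃)`
of the polynomial Pell equation for `D`, the rational functions `p′/q` and
`p̃′/q̃` agree up to a nonzero real constant: `p′·q̃ = c·(p̃′·q)`. -/
theorem pell_derivative_ratio_unique_up_to_real_constant (D p q pt qt : Polynomial ℂ)
    (hpq : p ^ 2 - q ^ 2 * D = 1) (hq : q ≠ 0)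
    (hpqt : pt ^ 2 - qt ^ 2 * D = 1) (hqt : qt ≠ 0) :
    ∃ c : ℝ, c ≠ 0 ∧
      derivative p * qt = Polynomial.C (c : ℂ) * (derivative pt * q) := by
  by_cases hDc : D.natDegree = 0
  · obtain ⟨a, ha⟩ := natDegree_eq_zero.mp hDc
    rw [← ha] at hpq hpqt
    refine ⟨1, one_ne_zero, ?_⟩
    rw [pell_const a p q hpq, pell_const a pt qt hpqt]
    simp
  · obtain ⟨σ, hσ⟩ : ∃ σ : ℂ, σ ^ 2 = D.leadingCoeff := by
      have := IsAlgClosed.exists_pow_nat_eq D.leadingCoeff (n := 2) (by norm_num)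
      simpa using this
    have hsign : ∀ r s : ℂ[X], r ^ 2 - s ^ 2 * D = 1 → s ≠ 0 →
        ∃ ε : ℝ, (ε = 1 ∨ ε = -1) ∧ PellPosSol D σ r (C (ε : ℂ) * s) := by
      intro r s hrs hs
      obtain ⟨_, _, hl⟩ := pell_deg D r s hDc hrs hs
      have hfac : (r.leadingCoeff - σ * s.leadingCoeff)
          * (r.leadingCoeff + σ * s.leadingCoeff) = 0 := by
        linear_combination hl - s.leadingCoeff ^ 2 * hσ
      rcases mul_eq_zero.mp hfac with h | h
      · refine ⟨1, Or.inl rfl, ?_, ?_, ?_⟩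
        · push_cast
          simpa using hrs
        · push_cast
          simpa using hs
        · push_cast
          rw [map_one, one_mul]
          linear_combination h
      · refine ⟨-1, Or.inr rfl, ?_, ?_, ?_⟩
        · push_cast
          have : (C (-1 : ℂ) * s) = -s := by rw [map_neg, map_one]; ring
          rw [this]
          linear_combination hrs
        · push_cast
          have : (C (-1 : ℂ) * s) = -s := by rw [map_neg, map_one]; ring
          rw [this]
          simpa using hs
        · push_cast
          have : (C (-1 : ℂ) * s) = -s := by rw [map_neg, map_one]; ring
          rw [this, leadingCoeff_neg]
          linear_combination h
    obtain ⟨ε, hεc, hP⟩ := hsign p q hpq hq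
    obtain ⟨εt, hεtc, hPt⟩ := hsign pt qt hpqt hqt
    obtain ⟨c, hc0, hceq⟩ := pell_main_pos D σ hDc hσ p (C (ε : ℂ) * q) pt (C (εt : ℂ) * qt) hP hPt
    have hεne : ε ≠ 0 := by rcases hεc with h | h <;> simp [h]
    have hεtne : εt ≠ 0 := by rcases hεtc with h | h <;> simp [h]
    refine ⟨c * ε * εt, mul_ne_zero (mul_ne_zero hc0 hεne) hεtne, ?_⟩
    have hεt2 : (C ((εt : ℝ) : ℂ) : ℂ[X]) ^ 2 = 1 := by
      rcases hεtc with h | h <;> subst h <;> norm_num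
    have hCprod : (C ((c * ε * εt : ℝ) : ℂ) : ℂ[X])
        = C ((c : ℝ) : ℂ) * C ((ε : ℝ) : ℂ) * C ((εt : ℝ) : ℂ) := by
      push_cast
      rw [map_mul, map_mul]
    rw [hCprod]
    linear_combination C ((εt : ℝ) : ℂ) * hceq - (derivative p * qt) * hεt2
end

section
/- Let D ∈ ℂ[X] with deg D = 2n for some n ≥ 1, and let (p, q) be a nontrivial solution of the Pell equation for D. Then deg p = deg q + n, the polynomial U := p′/q has degree n − 1, and the leading coefficients satisfy lc(p)² = lc(q)²·lc(D). In particular, if D is monic then the leading coefficient of U equals deg p or −deg p; in particular it is a nonzero real number. -/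
/-!
Since `deg D > 0`, the constant `1` does not affect the top of `p² = 1 + q²D`, which gives the
degree and the leading-coefficient relation. Differentiating the Pell equation gives
`2pp′ = q(2q′D + qD′)`; as `q` is coprime to `p` (the equation itself is a Bézout relation),
`q ∣ p′`. Comparing the top terms of `p′ = qU` then yields `deg U` and
`lc(q)·lc(U) = lc(p)·deg p`, and for monic `D` we have `lc(p) = ±lc(q)`.
-/

open Polynomial

namespace Polynomial

section Pell

variable {R : Type*} [CommRing R] {D p q U : R[X]}

theorem isCoprime_of_pell (hpq : p ^ 2 - q ^ 2 * D = 1) : IsCoprime q p :=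
  ⟨-(q * D), p, by linear_combination hpq⟩

theorem dvd_derivative_of_pell (hpq : p ^ 2 - q ^ 2 * D = 1) (h2 : IsUnit (2 : R)) :
    q ∣ derivative p := by
  have hderiv : 2 * (p * derivative p) = q * (2 * derivative q * D + q * derivative D) := by
    have h := congrArg derivative hpq
    simp only [derivative_sub, derivative_mul, derivative_sq, derivative_one, map_ofNat] at h
    linear_combination h
  have h2X : IsUnit (2 : R[X]) := by simpa only [map_ofNat] using h2.map C
  exact (isCoprime_of_pell hpq).dvd_of_dvd_mul_left <|
    h2X.dvd_mul_left.mp (Dvd.intro _ hderiv.symm)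

variable [IsDomain R]

theorem natDegree_sq_mul_pos (hq : q ≠ 0) (hD : 0 < D.natDegree) : 0 < (q ^ 2 * D).natDegree := by
  rw [natDegree_mul (pow_ne_zero 2 hq) (ne_zero_of_natDegree_gt hD)]
  omega

theorem two_mul_natDegree_of_pell (hpq : p ^ 2 - q ^ 2 * D = 1) (hq : q ≠ 0)
    (hD : 0 < D.natDegree) :
    2 * p.natDegree = 2 * q.natDegree + D.natDegree := by
  have h := congrArg natDegree (eq_add_of_sub_eq hpq)
  rwa [natDegree_add_eq_right_of_natDegree_lt (by simpa using natDegree_sq_mul_pos hq hD),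
    natDegree_pow, natDegree_mul (pow_ne_zero 2 hq) (ne_zero_of_natDegree_gt hD),
    natDegree_pow] at h

theorem leadingCoeff_sq_of_pell (hpq : p ^ 2 - q ^ 2 * D = 1) (hq : q ≠ 0)
    (hD : 0 < D.natDegree) : p.leadingCoeff ^ 2 = q.leadingCoeff ^ 2 * D.leadingCoeff := by
  have h := congrArg leadingCoeff (eq_add_of_sub_eq hpq)
  rwa [leadingCoeff_add_of_degree_lt
      (degree_lt_degree (by simpa using natDegree_sq_mul_pos hq hD)),
    leadingCoeff_pow, leadingCoeff_mul, leadingCoeff_pow] at h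

variable [CharZero R]

theorem natDegree_add_natDegree_of_derivative_eq_mul (hU : derivative p = q * U)
    (hp : p.natDegree ≠ 0) : q.natDegree + U.natDegree = p.natDegree - 1 := by
  have hqU : q * U ≠ 0 := hU ▸ derivative_ne_zero.2 hp
  rw [← natDegree_mul (left_ne_zero_of_mul hqU) (right_ne_zero_of_mul hqU), ← hU,
    natDegree_derivative]

theorem leadingCoeff_eq_or_eq_neg_of_derivative_eq_mul (hU : derivative p = q * U) (hq : q ≠ 0)
    (hsq : p.leadingCoeff ^ 2 = q.leadingCoeff ^ 2) :
    U.leadingCoeff = p.natDegree ∨ U.leadingCoeff = -p.natDegree := by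
  have hlc : q.leadingCoeff * U.leadingCoeff = p.leadingCoeff * p.natDegree := by
    rw [← leadingCoeff_mul, ← hU, leadingCoeff_derivative]
  have hq' : q.leadingCoeff ≠ 0 := leadingCoeff_ne_zero.2 hq
  rcases (Commute.all _ _).sq_eq_sq_iff_eq_or_eq_neg.1 hsq with h | h
  · exact .inl <| mul_left_cancel₀ hq' (by rw [hlc, h])
  · exact .inr <| mul_left_cancel₀ hq' (by rw [hlc, h]; ring)

end Pell

end Polynomial

/-- If `deg D = 2n` (`n ≥ 1`) and `(p, q)` is a nontrivial
solution of the Pell equation for `D`, then `deg p = deg q + n`, the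
polynomial `U = p′/q` has degree `n - 1`, and `lc(p)² = lc(q)²·lc(D)`;
if moreover `D` is monic then the leading coefficient of `U` is `± deg p`,
in particular a nonzero real number. -/
theorem pell_degree_and_leading_coeff (n : ℕ) (hn : 1 ≤ n) (D p q : Polynomial ℂ)
    (hD : D.natDegree = 2 * n)
    (hpq : p ^ 2 - q ^ 2 * D = 1) (hq : q ≠ 0) :
    p.natDegree = q.natDegree + n ∧
    p.leadingCoeff ^ 2 = q.leadingCoeff ^ 2 * D.leadingCoeff ∧
    ∃ U : Polynomial ℂ, derivative p = q * U ∧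
      U.degree = ((n - 1 : ℕ) : WithBot ℕ) ∧
      (D.Monic →
        (U.leadingCoeff = (p.natDegree : ℂ) ∨
          U.leadingCoeff = -(p.natDegree : ℂ))) := by
  have hD0 : 0 < D.natDegree := by omega
  have hdeg : p.natDegree = q.natDegree + n := by
    have := two_mul_natDegree_of_pell hpq hq hD0
    omega
  have hlc := leadingCoeff_sq_of_pell hpq hq hD0
  obtain ⟨U, hU⟩ := dvd_derivative_of_pell hpq (isUnit_of_invertible (2 : ℂ))
  have hp : p.natDegree ≠ 0 := by omega
  have hU0 : U ≠ 0 := right_ne_zero_of_mul (hU ▸ derivative_ne_zero.2 hp)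
  have hUdeg := natDegree_add_natDegree_of_derivative_eq_mul hU hp
  refine ⟨hdeg, hlc, U, hU, by rw [degree_eq_natDegree hU0]; norm_cast; omega, fun hmon => ?_⟩
  exact leadingCoeff_eq_or_eq_neg_of_derivative_eq_mul hU hq
    (by rw [hlc, hmon.leadingCoeff, mul_one])
end

section
/- Let D ∈ ℂ[X] with deg D = 2n for some n ≥ 1, let (p, q) be a nontrivial solution of the Pell equation for D, and set U := p′/q ∈ ℂ[X]. Let α ∈ ℂ be a root of D, let k₁ ≥ 1 be the multiplicity of α as a root of D, and let k₂ be the multiplicity of α as a root of U. Then k₂ ≥ k₁ − 1, and moreover (X − α)²·D is Pellian if and only if k₂ ≥ k₁. -/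
/-!
Differentiating `p² - q²D = 1` gives `(q²D)' = 2pp' = 2pqU`, and `p(α) = ±1`; comparing
multiplicities at `α` yields `mult_α U + 1 = mult_α q + mult_α D`. Hence `k₂ ≥ k₁ - 1`, with
equality iff `q(α) ≠ 0`, while `(X - α)²D` is Pellian iff some nontrivial solution of the Pell
equation for `D` has `q(α) = 0`. That this does not depend on the solution comes from the
norm-one group of `ℂ[X][√D]`: by descent on `deg q` it is generated by `-1` and a solution `u₀`
of least degree, and reduction modulo `X - α` maps it homomorphically to `(ℂ, +)` through
`p + q√D ↦ p(α) q(α)`, a map vanishing exactly when `q(α) = 0`.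
-/

open Polynomial

def IsPellian (D : Polynomial ℂ) : Prop :=
  ∃ p q : Polynomial ℂ, p ^ 2 - q ^ 2 * D = 1 ∧ q ≠ 0

theorem rootMultiplicity_add_one_of_pell {F : Type*} [Field F] [CharZero F] {D p q U : F[X]}
    (hpq : p ^ 2 - q ^ 2 * D = 1) (hq : q ≠ 0) (hD : D ≠ 0) (hU : derivative p = q * U)
    {α : F} (hα : D.IsRoot α) :
    rootMultiplicity α U + 1 = rootMultiplicity α q + rootMultiplicity α D := by
  have hroot : (q ^ 2 * D).IsRoot α := by simp [hα.eq_zero]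
  have hderiv : derivative (q ^ 2 * D) = C 2 * p * (q * U) := by
    rw [show q ^ 2 * D = p ^ 2 - 1 by linear_combination -hpq, derivative_sub, derivative_one,
      sub_zero, derivative_pow, hU]
    simp
  have hmult_q2D : rootMultiplicity α (q ^ 2 * D) =
      2 * rootMultiplicity α q + rootMultiplicity α D := by
    rw [rootMultiplicity_mul (by simp [hq, hD]), pow_two, rootMultiplicity_mul (by simp [hq])]
    ring
  have hmult := derivative_rootMultiplicity_of_root hroot
  rw [hderiv, hmult_q2D] at hmult
  have hk₁ := (rootMultiplicity_pos hD).mpr hα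
  rcases eq_or_ne U 0 with rfl | hU0
  · simp only [mul_zero, rootMultiplicity_zero] at hmult ⊢
    omega
  have h2p : (C 2 * p).eval α ≠ 0 := by
    have hpα := congrArg (eval α) hpq
    simp only [eval_sub, eval_mul, eval_pow, hα.eq_zero, mul_zero, sub_zero, eval_one] at hpα
    simp only [eval_mul, eval_C]
    exact mul_ne_zero two_ne_zero (by rintro h; simp [h] at hpα)
  have h2p_ne : C 2 * p ≠ 0 := fun h => h2p (by rw [h, eval_zero])
  rw [rootMultiplicity_mul (mul_ne_zero h2p_ne (mul_ne_zero hq hU0)),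
    rootMultiplicity_mul (mul_ne_zero hq hU0), rootMultiplicity_eq_zero h2p] at hmult
  omega

theorem Polynomial.degree_lt_or_degree_lt_of_mul_eq_sq_sub_sq {R : Type*} [CommRing R]
    [NoZeroDivisors R] {q q₀ r s : R[X]} (hq : q ≠ 0) (hq₀ : q₀.natDegree ≤ q.natDegree)
    (hmul : r * s = q ^ 2 - q₀ ^ 2) (hadd : q.natDegree < (r + s).natDegree) :
    r.degree < q.degree ∨ s.degree < q.degree := by
  rcases eq_or_ne r 0 with rfl | hr
  · exact .inl (degree_zero (R := R) ▸ (degree_ne_bot.mpr hq).bot_lt)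
  rcases eq_or_ne s 0 with rfl | hs
  · exact .inr (degree_zero (R := R) ▸ (degree_ne_bot.mpr hq).bot_lt)
  have hprod : r.natDegree + s.natDegree ≤ 2 * q.natDegree := by
    rw [← natDegree_mul hr hs, hmul]
    refine (natDegree_sub_le _ _).trans ?_
    rw [natDegree_pow, natDegree_pow]
    omega
  have hsum := (natDegree_add_le r s).trans_lt' hadd
  rw [degree_eq_natDegree hq, degree_eq_natDegree hr, degree_eq_natDegree hs]
  norm_cast
  omega

namespace PolynomialPell

open QuadraticAlgebra

variable {F : Type*} [Field F] {D : F[X]}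

local notation "K" => QuadraticAlgebra F[X] D 0

theorem mem_unitary_iff {u : K} : u ∈ unitary K ↔ u.re ^ 2 - u.im ^ 2 * D = 1 := by
  rw [Unitary.mem_iff_self_mul_star, QuadraticAlgebra.ext_iff]
  simp only [re_mul, re_star, zero_mul, add_zero, im_star, mul_neg, re_one, im_mul, neg_zero,
    im_one]
  constructor
  · intro h
    linear_combination h.1
  · intro h
    exact ⟨by linear_combination h, by ring⟩

theorem re_sq_sub_im_sq_mul (u : unitary K) : (u : K).re ^ 2 - (u : K).im ^ 2 * D = 1 :=
  mem_unitary_iff.mp u.2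

theorem eq_one_or_eq_neg_one_of_im_eq_zero {u : unitary K} (hu : (u : K).im = 0) :
    u = 1 ∨ u = -1 := by
  have h := re_sq_sub_im_sq_mul u
  rw [hu] at h
  have hfactor : ((u : K).re - 1) * ((u : K).re + 1) = 0 := by linear_combination h
  rcases mul_eq_zero.mp hfactor with h1 | h1
  · exact .inl <| Subtype.ext <| QuadraticAlgebra.ext (by simpa [sub_eq_zero] using h1)
      (by simpa using hu)
  · exact .inr <| Subtype.ext <| QuadraticAlgebra.ext
      (by simpa [add_eq_zero_iff_eq_neg, Unitary.coe_neg] using h1)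
      (by simpa [Unitary.coe_neg] using hu)

theorem natDegree_re_pos (hD : 0 < D.natDegree) {u : unitary K} (hu : (u : K).im ≠ 0) :
    0 < (u : K).re.natDegree := by
  by_contra! h
  obtain ⟨c, hc⟩ := natDegree_eq_zero.mp (Nat.le_zero.mp h)
  have hconst : (u : K).im ^ 2 * D = C (c ^ 2 - 1) := by
    rw [map_sub, map_pow, hc, map_one]
    linear_combination -(re_sq_sub_im_sq_mul u)
  have hdeg := congrArg natDegree hconst
  rw [natDegree_C, natDegree_mul (pow_ne_zero 2 hu) (by rintro rfl; simp at hD)] at hdeg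
  omega

theorem exists_degree_im_mul_inv_lt [CharZero F] (hD : 0 < D.natDegree) {u u₀ : unitary K}
    (hu : (u : K).im ≠ 0) (hu₀ : (u₀ : K).im ≠ 0)
    (hle : (u₀ : K).im.natDegree ≤ (u : K).im.natDegree) :
    ∃ ε ∈ ({u, -u⁻¹} : Set (unitary K)),
      ((ε * u₀⁻¹ : unitary K) : K).im.degree < (u : K).im.degree := by
  have h₀ := re_sq_sub_im_sq_mul u₀
  have h := re_sq_sub_im_sq_mul u
  -- for `u = p + q√D`, `u₀ = p₀ + q₀√D` these imaginary parts are `q p₀ ∓ p q₀`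
  have hmul : ((u * u₀⁻¹ : unitary K) : K).im * ((-u⁻¹ * u₀⁻¹ : unitary K) : K).im =
      (u : K).im ^ 2 - (u₀ : K).im ^ 2 := by
    simp only [← Unitary.star_eq_inv, Submonoid.coe_mul, Unitary.coe_star, Unitary.coe_neg,
      im_mul, im_star, re_star, im_neg, zero_mul, add_zero, mul_neg, neg_mul, neg_neg]
    linear_combination (u : K).im ^ 2 * h₀ - (u₀ : K).im ^ 2 * h
  have hadd : ((u * u₀⁻¹ : unitary K) : K).im + ((-u⁻¹ * u₀⁻¹ : unitary K) : K).im =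
      C 2 * (u : K).im * (u₀ : K).re := by
    simp only [← Unitary.star_eq_inv, Submonoid.coe_mul, Unitary.coe_star, Unitary.coe_neg,
      im_mul, im_star, re_star, im_neg, zero_mul, add_zero, mul_neg, neg_mul, neg_neg, map_ofNat]
    ring
  have hdeg : (u : K).im.natDegree <
      (((u * u₀⁻¹ : unitary K) : K).im + ((-u⁻¹ * u₀⁻¹ : unitary K) : K).im).natDegree := by
    have hp₀ := natDegree_re_pos hD hu₀
    rw [hadd, natDegree_mul (by simp [hu]) (by rintro h; simp [h] at hp₀),
      natDegree_C_mul (by norm_num)]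
    omega
  obtain hlt | hlt := degree_lt_or_degree_lt_of_mul_eq_sq_sub_sq hu hle hmul hdeg
  · exact ⟨u, by simp, hlt⟩
  · exact ⟨-u⁻¹, by simp, hlt⟩

theorem mem_closure_of_forall_natDegree_im_le [CharZero F] (hD : 0 < D.natDegree)
    {u₀ : unitary K} (hu₀ : (u₀ : K).im ≠ 0)
    (hmin : ∀ v : unitary K, (v : K).im ≠ 0 → (u₀ : K).im.natDegree ≤ (v : K).im.natDegree)
    (u : unitary K) : u ∈ Subgroup.closure {-1, u₀} := by
  set H := Subgroup.closure ({-1, u₀} : Set (unitary K))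
  have hneg : (-1 : unitary K) ∈ H := Subgroup.subset_closure (by simp)
  have hu₀H : u₀ ∈ H := Subgroup.subset_closure (by simp)
  induction hd : (u : K).im.degree using WellFoundedLT.induction generalizing u with
  | ind d ih =>
  rcases eq_or_ne (u : K).im 0 with hu | hu
  · obtain rfl | rfl := eq_one_or_eq_neg_one_of_im_eq_zero hu
    exacts [H.one_mem, hneg]
  obtain ⟨ε, hε, hlt⟩ := exists_degree_im_mul_inv_lt hD hu hu₀ (hmin u hu)
  have hεH : ε ∈ H :=
    (H.mul_mem_cancel_right (H.inv_mem hu₀H)).mp (ih _ (hd ▸ hlt) _ rfl)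
  rcases hε with rfl | rfl
  · exact hεH
  · simpa using H.mul_mem hneg (H.inv_mem hεH)

theorem eval_re_sq {α : F} (hα : D.IsRoot α) (u : unitary K) :
    ((u : K).re.eval α) ^ 2 = 1 := by
  simpa [hα.eq_zero] using congrArg (eval α) (re_sq_sub_im_sq_mul u)

/-- Modulo `X - α` the ring `F[X][√D]` becomes the dual numbers `F[ε]`, and a norm-one element
becomes `±(1 + t ε)`; `slopeAt hα` records `t`, which is additive. -/
def slopeAt {α : F} (hα : D.IsRoot α) : unitary K →* Multiplicative F where
  toFun u := .ofAdd ((u : K).re.eval α * (u : K).im.eval α)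
  map_one' := by simp
  map_mul' u v := by
    simp only [Submonoid.coe_mul, re_mul, im_mul, eval_add, eval_mul, hα.eq_zero, zero_mul,
      add_zero, ← ofAdd_add, EmbeddingLike.apply_eq_iff_eq]
    linear_combination ((u : K).re.eval α * (u : K).im.eval α) * eval_re_sq hα v +
      ((v : K).re.eval α * (v : K).im.eval α) * eval_re_sq hα u

theorem toAdd_slopeAt_eq_zero_iff {α : F} (hα : D.IsRoot α) (u : unitary K) :
    (slopeAt hα u).toAdd = 0 ↔ (u : K).im.eval α = 0 := by
  have hre : (u : K).re.eval α ≠ 0 := by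
    intro h
    simpa [h] using eval_re_sq hα u
  simp [slopeAt, hre]

theorem eval_im_eq_zero_iff_of_mem_closure [CharZero F] {α : F} (hα : D.IsRoot α)
    {u₀ u : unitary K} (hu : (u : K).im ≠ 0) (hmem : u ∈ Subgroup.closure {-1, u₀}) :
    (u : K).im.eval α = 0 ↔ (u₀ : K).im.eval α = 0 := by
  obtain ⟨m, n, rfl⟩ := Subgroup.mem_closure_pair.mp hmem
  have hn : n ≠ 0 := by
    rintro rfl
    rcases Int.even_or_odd m with hm | hm
    · simp [hm.neg_one_zpow] at hu
    · simp [hm.neg_one_zpow, Unitary.coe_neg] at hu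
  have hneg : slopeAt hα (-1) = 1 := by simp [slopeAt, Unitary.coe_neg]
  rw [← toAdd_slopeAt_eq_zero_iff hα, ← toAdd_slopeAt_eq_zero_iff hα, map_mul, map_zpow,
    map_zpow, hneg]
  simp [hn]

theorem isRoot_iff_isRoot_of_pell [CharZero F] (hD : 0 < D.natDegree) {α : F}
    (hα : D.IsRoot α) {p q a b : F[X]} (hpq : p ^ 2 - q ^ 2 * D = 1) (hq : q ≠ 0)
    (hab : a ^ 2 - b ^ 2 * D = 1) (hb : b ≠ 0) :
    q.IsRoot α ↔ b.IsRoot α := by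
  let u : unitary K := ⟨⟨p, q⟩, mem_unitary_iff.mpr hpq⟩
  let v : unitary K := ⟨⟨a, b⟩, mem_unitary_iff.mpr hab⟩
  obtain ⟨u₀, hu₀, hmin⟩ := (measure fun w : unitary K => (w : K).im.natDegree).wf.has_min
    {w | (w : K).im ≠ 0} ⟨u, hq⟩
  have hclosure :=
    mem_closure_of_forall_natDegree_im_le hD hu₀ (fun w hw => not_lt.mp (hmin w hw))
  exact (eval_im_eq_zero_iff_of_mem_closure hα (u := u) hq (hclosure u)).trans
    (eval_im_eq_zero_iff_of_mem_closure hα (u := v) hb (hclosure v)).symm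

end PolynomialPell

theorem isPellian_X_sub_C_sq_mul_iff {D p q : ℂ[X]} (hD : 0 < D.natDegree)
    (hpq : p ^ 2 - q ^ 2 * D = 1) (hq : q ≠ 0) {α : ℂ} (hα : D.IsRoot α) :
    IsPellian ((X - C α) ^ 2 * D) ↔ q.IsRoot α := by
  constructor
  · rintro ⟨a, b, hab, hb⟩
    refine (PolynomialPell.isRoot_iff_isRoot_of_pell hD hα hpq hq (a := a) (b := (X - C α) * b)
      (by linear_combination hab) (mul_ne_zero (X_sub_C_ne_zero α) hb)).mpr ?_
    simp
  · intro hqα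
    have hfactor := mul_divByMonic_eq_iff_isRoot.mpr hqα
    refine ⟨p, q /ₘ (X - C α), ?_, fun h => hq (by rw [← hfactor, h, mul_zero])⟩
    rw [← hfactor] at hpq
    linear_combination hpq

theorem pell_root_multiplicity_general (D p q U : Polynomial ℂ)
    (hpq : p ^ 2 - q ^ 2 * D = 1) (hq : q ≠ 0)
    (hU : derivative p = q * U)
    (α : ℂ) (hα : D.IsRoot α) (k₁ k₂ : ℕ)
    (hk₁ : k₁ = rootMultiplicity α D) (hk₂ : k₂ = rootMultiplicity α U) :
    k₁ - 1 ≤ k₂ ∧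
    (IsPellian ((X - C α) ^ 2 * D) ↔ k₁ ≤ k₂) := by
  subst hk₁ hk₂
  rcases eq_or_ne D 0 with rfl | hD
  · exact ⟨by simp, by simpa using ⟨1, 1, by simp, one_ne_zero⟩⟩
  have hmult := rootMultiplicity_add_one_of_pell hpq hq hD hU hα
  have hk₁ := (rootMultiplicity_pos hD).mpr hα
  have hdeg := natDegree_pos_iff_degree_pos.mpr (degree_pos_of_root hD hα)
  refine ⟨by omega, ?_⟩
  rw [isPellian_X_sub_C_sq_mul_iff hdeg hpq hq hα, ← rootMultiplicity_pos hq]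
  omega

/-- Let `deg D = 2n`, let `(p, q)` be a nontrivial Pell
solution for `D` and `U = p′/q`. If `α` is a root of `D` of multiplicity
`k₁ ≥ 1` and `k₂` is the multiplicity of `α` as a root of `U`, then
`k₂ ≥ k₁ - 1`, and `(X - α)²·D` is Pellian if and only if `k₂ ≥ k₁`. -/
theorem pell_root_multiplicity (n : ℕ) (hn : 1 ≤ n) (D p q U : Polynomial ℂ)
    (hD : D.natDegree = 2 * n)
    (hpq : p ^ 2 - q ^ 2 * D = 1) (hq : q ≠ 0)
    (hU : derivative p = q * U)
    (α : ℂ) (hα : D.IsRoot α) (k₁ k₂ : ℕ)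
    (hk₁ : k₁ = rootMultiplicity α D) (hk₂ : k₂ = rootMultiplicity α U) :
    k₁ - 1 ≤ k₂ ∧
    (IsPellian ((X - C α) ^ 2 * D) ↔ k₁ ≤ k₂) :=
  pell_root_multiplicity_general D p q U hpq hq hU α hα k₁ k₂ hk₁ hk₂
end

section
/- Let D ∈ ℂ[X] with deg D = 2n for some n ≥ 1. If D has at most n distinct complex roots, then D is not Pellian; that is, every solution (p, q) ∈ ℂ[X] × ℂ[X] of p² − q²·D = 1 has q = 0. -/
open Polynomial

open UniqueFactorizationMonoid
lemma mem_primeFactors_iff {D p : Polynomial ℂ} :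
    p ∈ primeFactors D ↔ p ∈ normalizedFactors D := by
  simp only [primeFactors, Multiset.mem_toFinset]

lemma radical_mul_dvd' {a b : Polynomial ℂ} (ha : a ≠ 0) (hb : b ≠ 0) :
    radical (a * b) ∣ radical a * radical b := by
  have h : primeFactors (a * b) = primeFactors a ∪ primeFactors b := by
    ext x
    simp only [Finset.mem_union, mem_primeFactors, normalizedFactors_mul ha hb, Multiset.mem_add]
  rw [radical, radical, radical, h]
  exact ⟨(primeFactors a ∩ primeFactors b).prod id, Finset.prod_union_inter.symm⟩

lemma natDegree_radical_le_card_roots {D : Polynomial ℂ} (hD : D ≠ 0) :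
    (radical D).natDegree ≤ D.roots.toFinset.card := by
  have hlin : ∀ p ∈ primeFactors D, p = X + C (p.coeff 0) ∧ p.natDegree = 1 := by
    intro p hp
    have hmem : p ∈ normalizedFactors D := mem_primeFactors_iff.mp hp
    have hprime : Prime p := prime_of_normalized_factor p hmem
    have hdeg : p.degree = 1 := IsAlgClosed.degree_eq_one_of_irreducible ℂ hprime.irreducible
    have hmonic : p.Monic := by
      have := normalize_normalized_factor p hmem
      rw [← this]; exact monic_normalize hprime.ne_zero
    have hnd : p.natDegree = 1 := natDegree_eq_of_degree_eq_some hdeg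
    refine ⟨?_, hnd⟩
    have h1 := eq_X_add_C_of_natDegree_le_one (p := p) (by omega)
    have hc1 : p.coeff 1 = 1 := by
      rw [show (1 : ℕ) = p.natDegree from hnd.symm]; exact hmonic
    rwa [hc1, map_one, one_mul] at h1
  have h1 : (radical D).natDegree = (primeFactors D).card := by
    have hne : ∀ p ∈ primeFactors D, id p ≠ (0 : Polynomial ℂ) :=
      fun p hp => (prime_of_normalized_factor p (mem_primeFactors_iff.mp hp)).ne_zero
    have h2 := Polynomial.natDegree_prod (primeFactors D) id hne
    rw [radical, h2, Finset.card_eq_sum_ones]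
    exact Finset.sum_congr rfl fun p hp => (hlin p hp).2
  rw [h1]
  apply Finset.card_le_card_of_injOn (fun p => -(p.coeff 0))
  · intro p hp
    have hdvd : p ∣ D := dvd_of_mem_normalizedFactors (mem_primeFactors_iff.mp hp)
    rw [Finset.mem_coe, Multiset.mem_toFinset, mem_roots hD]
    have : p.IsRoot (-(p.coeff 0)) := by
      rw [IsRoot, (hlin p hp).1]; simp
    exact this.dvd hdvd
  · intro p hp q hq hfe
    rw [(hlin p hp).1, (hlin q hq).1, show p.coeff 0 = q.coeff 0 from by
      simpa using neg_injective hfe]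

/-- If `deg D = 2n` (`n ≥ 1`) and `D` has at most `n`
distinct complex roots, then `D` is not Pellian: every solution of
`p² - q²·D = 1` has `q = 0`. -/
theorem not_pellian_of_few_distinct_roots (n : ℕ) (hn : 1 ≤ n)
    (D : Polynomial ℂ) (hD : D.natDegree = 2 * n)
    (hroots : D.roots.toFinset.card ≤ n) :
    ∀ p q : Polynomial ℂ, p ^ 2 - q ^ 2 * D = 1 → q = 0 := by
  intro p q heq
  by_contra hq
  -- basic nonvanishing
  have hDne : D ≠ 0 := fun h => by simp [h] at hD; omega
  have hq2D : q ^ 2 * D ≠ 0 := mul_ne_zero (pow_ne_zero 2 hq) hDne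
  have hndq2D : (q ^ 2 * D).natDegree = 2 * q.natDegree + 2 * n := by
    rw [Polynomial.natDegree_mul (pow_ne_zero 2 hq) hDne, natDegree_pow, hD]
  have hp : p ≠ 0 := by
    intro h
    rw [h] at heq
    have : q ^ 2 * D = -1 := by linear_combination -heq
    have := congrArg Polynomial.natDegree this
    rw [hndq2D] at this
    simp at this
    omega
  -- apply Mason–Stothers
  have habc := Polynomial.abc (k := ℂ)
    (a := p ^ 2) (b := -(q ^ 2 * D)) (c := -1)
    (pow_ne_zero 2 hp) (neg_ne_zero.mpr hq2D) (by norm_num)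
    ⟨1, 1, by linear_combination heq⟩
    (by linear_combination heq)
  have hprod : p ^ 2 * -(q ^ 2 * D) * -1 = p ^ 2 * (q ^ 2 * D) := by ring
  rw [hprod] at habc
  rcases habc with ⟨h1, h2, -⟩ | ⟨-, h2, -⟩
  · -- degree bound on the radical
    set R := (radical (p ^ 2 * (q ^ 2 * D))).natDegree with hR
    have hcop : IsCoprime (p ^ 2) (q ^ 2 * D) := ⟨1, -1, by linear_combination heq⟩
    have hrad : radical (p ^ 2 * (q ^ 2 * D)) = radical (p ^ 2) * radical (q ^ 2 * D) :=
      radical_mul hcop.isRelPrime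
    have hdvd : radical (p ^ 2) * radical (q ^ 2 * D) ∣ p * (radical q * radical D) := by
      rw [radical_pow p (by norm_num)]
      exact mul_dvd_mul (radical_dvd_self (a := p))
        ((radical_mul_dvd' (pow_ne_zero 2 hq) hDne).trans
          (by rw [radical_pow q (by norm_num)]))
    have hne : p * (radical q * radical D) ≠ 0 :=
      mul_ne_zero hp (mul_ne_zero (radical_ne_zero (a := q)) (radical_ne_zero (a := D)))
    have hRle : R ≤ p.natDegree + (q.natDegree + D.roots.toFinset.card) := by
      calc R ≤ (p * (radical q * radical D)).natDegree :=
            Polynomial.natDegree_le_of_dvd (hrad ▸ hdvd) hne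
        _ = p.natDegree + ((radical q).natDegree + (radical D).natDegree) := by
            rw [Polynomial.natDegree_mul hp (mul_ne_zero (radical_ne_zero (a := q)) (radical_ne_zero (a := D))),
              Polynomial.natDegree_mul (radical_ne_zero (a := q)) (radical_ne_zero (a := D))]
        _ ≤ p.natDegree + (q.natDegree + D.roots.toFinset.card) := by
            gcongr
            · exact Polynomial.natDegree_le_of_dvd (radical_dvd_self (a := q)) hq
            · exact natDegree_radical_le_card_roots hDne
    rw [natDegree_pow] at h1
    rw [natDegree_neg, hndq2D] at h2
    omega
  · -- derivative branch: q² D would be constant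
    rw [derivative_neg, neg_eq_zero] at h2
    have := Polynomial.natDegree_eq_zero_of_derivative_eq_zero h2
    omega
end

section
/- A polynomial D ∈ ℂ[X] of degree 2 is Pellian if and only if D is squarefree (equivalently, its two roots are distinct). -/
open Polynomial

/-- A quadratic polynomial `D ∈ ℂ[X]` is Pellian if and
only if it is squarefree. -/
theorem pellian_iff_squarefree_of_degree_two (D : Polynomial ℂ)
    (hD : D.natDegree = 2) :
    IsPellian D ↔ Squarefree D := by
  have hD0 : D ≠ 0 := by
    intro h; rw [h] at hD; simp at hD
  constructor
  · rintro ⟨p, q, hpq, hq⟩ x hx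
    by_contra hxu
    obtain ⟨e, he⟩ := hx
    have hx0 : x ≠ 0 := by
      rintro rfl; simp at he; exact hD0 he
    have he0 : e ≠ 0 := by
      rintro rfl; simp at he; exact hD0 he
    have hnd : x.natDegree + x.natDegree + e.natDegree = 2 := by
      rw [← hD, he, natDegree_mul (mul_ne_zero hx0 hx0) he0,
        natDegree_mul hx0 hx0]
    have hx1 : 1 ≤ x.natDegree := by
      rcases Nat.eq_zero_or_pos x.natDegree with h0 | h1
      · exact absurd (isUnit_iff.2 ⟨x.coeff 0, isUnit_iff_ne_zero.2 (by
          intro hc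
          apply hx0
          rw [eq_C_of_natDegree_eq_zero h0, hc, map_zero]), by
          rw [eq_C_of_natDegree_eq_zero h0]; simp⟩) hxu
      · exact h1
    have hex : x.natDegree = 1 ∧ e.natDegree = 0 := by omega
    -- e is a nonzero constant, take its square root
    set c := e.coeff 0 with hc
    have hec : e = C c := eq_C_of_natDegree_eq_zero hex.2
    have hc0 : c ≠ 0 := by
      intro h; apply he0; rw [hec, h, map_zero]
    obtain ⟨t, ht⟩ := IsAlgClosed.exists_pow_nat_eq (k := ℂ) c (n := 2) (by norm_num)
    have ht0 : t ≠ 0 := by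
      intro h; apply hc0; rw [← ht, h]; ring
    set w : Polynomial ℂ := q * x * C t with hw
    have hw0 : w ≠ 0 := mul_ne_zero (mul_ne_zero hq hx0) (by
      simpa using ht0)
    have hfact : (p - w) * (p + w) = 1 := by
      have : w ^ 2 = q ^ 2 * (x * x * e) := by
        rw [hw, hec, ← ht]; push_cast [map_pow]; ring
      calc (p - w) * (p + w) = p ^ 2 - w ^ 2 := by ring
        _ = p ^ 2 - q ^ 2 * D := by rw [this, he]
        _ = 1 := hpq
    have h1 : (p - w).natDegree = 0 :=
      natDegree_eq_zero_of_isUnit (IsUnit.of_mul_eq_one _ hfact)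
    have h2 : (p + w).natDegree = 0 :=
      natDegree_eq_zero_of_isUnit
        (IsUnit.of_mul_eq_one _ (by rw [mul_comm] at hfact; exact hfact))
    have h3 : ((p + w) - (p - w)).natDegree = 0 := by
      have h := natDegree_sub_le (p + w) (p - w)
      rw [h1, h2] at h
      simp only [max_self, Nat.le_zero] at h
      exact h
    have h4 : (p + w) - (p - w) = 2 * w := by ring
    have h5 : (2 * w : Polynomial ℂ).natDegree = w.natDegree := by
      rw [natDegree_mul two_ne_zero hw0]
      simp
    have h6 : w.natDegree = q.natDegree + 1 := by
      rw [hw, natDegree_mul (mul_ne_zero hq hx0) (by simpa using ht0),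
        natDegree_mul hq hx0, hex.1, natDegree_C]
    rw [h4, h5, h6] at h3
    omega
  · intro hsf
    -- factor D = (X - C r) * ((X - C s) * C a)
    obtain ⟨r, hr⟩ := Complex.exists_root (f := D) (by
      rw [degree_eq_natDegree hD0, hD]; norm_num)
    obtain ⟨E, hE⟩ := dvd_iff_isRoot.2 hr
    have hE0 : E ≠ 0 := by rintro rfl; simp at hE; exact hD0 hE
    have hEdeg : E.natDegree = 1 := by
      have := hD
      rw [hE, natDegree_mul (X_sub_C_ne_zero r) hE0, natDegree_X_sub_C] at this
      omega
    obtain ⟨s, hs⟩ := Complex.exists_root (f := E) (by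
      rw [degree_eq_natDegree hE0, hEdeg]; norm_num)
    obtain ⟨F, hF⟩ := dvd_iff_isRoot.2 hs
    have hF0 : F ≠ 0 := by rintro rfl; simp at hF; exact hE0 hF
    have hFdeg : F.natDegree = 0 := by
      have := hEdeg
      rw [hF, natDegree_mul (X_sub_C_ne_zero s) hF0, natDegree_X_sub_C] at this
      omega
    set a := F.coeff 0 with ha
    have hFa : F = C a := eq_C_of_natDegree_eq_zero hFdeg
    have ha0 : a ≠ 0 := by intro h; apply hF0; rw [hFa, h, map_zero]
    have hDfact : D = (X - C r) * ((X - C s) * C a) := by rw [hE, hF, hFa]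
    have hrs : r ≠ s := by
      rintro rfl
      have hu : IsUnit (X - C r) := hsf _ ⟨C a, by rw [hDfact]; ring⟩
      have := natDegree_eq_zero_of_isUnit hu
      rw [natDegree_X_sub_C] at this
      exact one_ne_zero this
    obtain ⟨t, ht⟩ := IsAlgClosed.exists_pow_nat_eq (k := ℂ) a (n := 2) (by norm_num)
    have ht0 : t ≠ 0 := by intro h; apply ha0; rw [← ht, h]; ring
    set n : ℂ := ((r - s) / 2) ^ 2 with hn
    have hn0 : n ≠ 0 := pow_ne_zero _ (div_ne_zero (sub_ne_zero.2 hrs) two_ne_zero)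
    set m : ℂ := (r + s) / 2 with hm
    refine ⟨C (2 / n) * (X - C m) ^ 2 - 1, C (2 / (n * t)) * (X - C m), ?_, ?_⟩
    · apply Polynomial.funext
      intro x
      simp only [hDfact, eval_sub, eval_mul, eval_pow, eval_C, eval_X, eval_one]
      have hu : (x - r) * ((x - s) * a) = ((x - m) ^ 2 - n) * t ^ 2 := by
        rw [hm, hn, ← ht]; ring
      rw [hu]
      field_simp
      ring
    · exact mul_ne_zero (by
        simpa using div_ne_zero two_ne_zero (mul_ne_zero hn0 ht0)) (X_sub_C_ne_zero m)
end

section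
/- Let h : ℂ → ℝ be harmonic on all of ℂ, and suppose there exist constants c ≥ 0 and R > 1 such that h(z) ≥ −c·ln|z| for all z with |z| ≥ R. Then h is constant. -/
open Complex MeasureTheory Filter Set Bornology Metric Topology

noncomputable section


/-- The Laplacian of a real-valued function on `ℂ ≅ ℝ²`. -/
def lapl (g : ℂ → ℝ) (ζ : ℂ) : ℝ :=
  fderiv ℝ (fun w => fderiv ℝ g w 1) ζ 1 +
    fderiv ℝ (fun w => fderiv ℝ g w Complex.I) ζ Complex.I

/-- `g` is harmonic on `U`: smooth with identically vanishing Laplacian. -/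
def HarmOn (g : ℂ → ℝ) (U : Set ℂ) : Prop :=
  ContDiffOn ℝ (⊤ : ℕ∞) g U ∧ ∀ ζ ∈ U, lapl g ζ = 0

/-- CR ⇒ complex differentiable. -/
lemma diffAt_of_CR {F : ℂ → ℂ} {z : ℂ} {L : ℂ →L[ℝ] ℂ} (hF : HasFDerivAt F L z)
    (hCR : L Complex.I = Complex.I * L 1) : DifferentiableAt ℂ F z := by
  set L' : ℂ →L[ℂ] ℂ := (L 1) • (1 : ℂ →L[ℂ] ℂ) with hL'
  have hres : L'.restrictScalars ℝ = L := by
    apply ContinuousLinearMap.ext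
    intro w
    have h1 : L w = L ((w.re : ℂ)) + L ((w.im : ℝ) • Complex.I) := by
      rw [← map_add]; congr 1
      simp [Complex.real_smul, Complex.re_add_im]
    have h2 : L ((w.re : ℂ)) = (w.re : ℝ) • L 1 := by
      rw [← _root_.map_smul]; norm_num [Complex.real_smul]
    have h3 : L ((w.im : ℝ) • Complex.I) = (w.im : ℝ) • L Complex.I := _root_.map_smul _ _ _
    show L' w = L w
    rw [h1, h2, h3, hCR, hL']
    simp only [ContinuousLinearMap.smul_apply, ContinuousLinearMap.one_apply,
      Complex.real_smul, smul_eq_mul]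
    nth_rewrite 1 [← Complex.re_add_im w]
    ring
  exact (hasFDerivAt_of_restrictScalars ℝ hF hres).differentiableAt

/-- The complexified gradient `∂h/∂x − i ∂h/∂y`. -/
def cgrad (h : ℂ → ℝ) (z : ℂ) : ℂ :=
  ((fderiv ℝ h z 1 : ℝ) : ℂ) - Complex.I * ((fderiv ℝ h z Complex.I : ℝ) : ℂ)

lemma lapl_eq (h : ℂ → ℝ) (hsm : ContDiff ℝ (⊤ : ℕ∞) h) (z : ℂ) :
    lapl h z = fderiv ℝ (fderiv ℝ h) z 1 1 + fderiv ℝ (fderiv ℝ h) z Complex.I Complex.I := by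
  have hd : DifferentiableAt ℝ (fderiv ℝ h) z :=
    ((hsm.fderiv_right (m := 1) ((WithTop.coe_le_coe.2 le_top))).differentiable one_ne_zero).differentiableAt
  have key : ∀ a : ℂ, fderiv ℝ (fun w => fderiv ℝ h w a) z = 
      (ContinuousLinearMap.apply ℝ ℝ a).comp (fderiv ℝ (fderiv ℝ h) z) := by
    intro a
    exact (((ContinuousLinearMap.apply ℝ ℝ a).hasFDerivAt).comp z hd.hasFDerivAt).fderiv
  rw [lapl, key 1, key Complex.I]
  rfl

lemma cgrad_entire (h : ℂ → ℝ) (hsm : ContDiff ℝ (⊤ : ℕ∞) h) (hlap : ∀ ζ, lapl h ζ = 0) :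
    Differentiable ℂ (cgrad h) := by
  intro z
  have hd : ∀ w, DifferentiableAt ℝ (fderiv ℝ h) w :=
    fun w => ((hsm.fderiv_right (m := 1) ((WithTop.coe_le_coe.2 le_top))).differentiable one_ne_zero).differentiableAt
  set f2 := fderiv ℝ (fderiv ℝ h) z with hf2
  have hu : HasFDerivAt (fun w => fderiv ℝ h w 1)
      ((ContinuousLinearMap.apply ℝ ℝ (1:ℂ)).comp f2) z :=
    ((ContinuousLinearMap.apply ℝ ℝ (1:ℂ)).hasFDerivAt).comp z (hd z).hasFDerivAt
  have hv : HasFDerivAt (fun w => fderiv ℝ h w Complex.I)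
      ((ContinuousLinearMap.apply ℝ ℝ (Complex.I)).comp f2) z :=
    ((ContinuousLinearMap.apply ℝ ℝ (Complex.I)).hasFDerivAt).comp z (hd z).hasFDerivAt
  set A := Complex.ofRealCLM.comp ((ContinuousLinearMap.apply ℝ ℝ (1:ℂ)).comp f2) with hA
  set B := Complex.ofRealCLM.comp ((ContinuousLinearMap.apply ℝ ℝ (Complex.I)).comp f2) with hB
  have hFd : HasFDerivAt (cgrad h) (A - Complex.I • B) z := by
    have h1 : HasFDerivAt (fun w => ((fderiv ℝ h w 1 : ℝ) : ℂ)) A z :=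
      Complex.ofRealCLM.hasFDerivAt.comp z hu
    have h2 : HasFDerivAt (fun w => ((fderiv ℝ h w Complex.I : ℝ) : ℂ)) B z :=
      Complex.ofRealCLM.hasFDerivAt.comp z hv
    exact h1.sub (h2.const_mul Complex.I)
  apply diffAt_of_CR hFd
  have hsym : f2 1 Complex.I = f2 Complex.I 1 := by
    apply second_derivative_symmetric (f := h) (f' := fderiv ℝ h)
      (fun y => ((hsm.differentiable (by simp)) y).hasFDerivAt) (hd z).hasFDerivAt
  have hharm : f2 1 1 + f2 Complex.I Complex.I = 0 := by
    rw [← lapl_eq h hsm z]; exact hlap z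
  have hII : f2 Complex.I Complex.I = -(f2 1 1) := by linarith
  simp only [ContinuousLinearMap.sub_apply, ContinuousLinearMap.smul_apply, hA, hB,
    ContinuousLinearMap.comp_apply, ContinuousLinearMap.apply_apply, Complex.ofRealCLM_apply,
    hsym, hII, smul_eq_mul]
  push_cast
  ring_nf
  rw [Complex.I_sq]
  ring

/-- A primitive of `G`, built from two straight-line integrals. -/
def prim (G : ℂ → ℂ) (z : ℂ) : ℂ :=
  (∫ t : ℝ in (0:ℝ)..z.re, G t) + Complex.I * ∫ t : ℝ in (0:ℝ)..z.im, G (z.re + t * Complex.I)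

lemma prim_rect (G : ℂ → ℂ) (hG : Differentiable ℂ G) (x y : ℝ) :
    prim G (x + y * Complex.I) =
      Complex.I * (∫ t : ℝ in (0:ℝ)..y, G (t * Complex.I)) +
        ∫ t : ℝ in (0:ℝ)..x, G (t + y * Complex.I) := by
  have key := Complex.integral_boundary_rect_eq_zero_of_differentiableOn G 0 (x + y * Complex.I)
    (hG.differentiableOn)
  simp only [Complex.zero_re, Complex.zero_im, Complex.ofReal_zero, zero_mul, add_zero,
    Complex.add_re, Complex.add_im, Complex.ofReal_re, Complex.ofReal_im, Complex.mul_re,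
    Complex.mul_im, Complex.I_re, Complex.I_im, mul_zero, mul_one, zero_add, sub_zero,
    smul_eq_mul, zero_sub, neg_zero] at key
  rw [prim]
  simp only [Complex.add_re, Complex.add_im, Complex.ofReal_re, Complex.ofReal_im,
    Complex.mul_re, Complex.mul_im, Complex.I_re, Complex.I_im, mul_zero, mul_one,
    zero_add, sub_zero, zero_sub, neg_zero, add_zero, zero_mul]
  linear_combination key

lemma prim_hasDerivAt (G : ℂ → ℂ) (hG : Differentiable ℂ G) (z₀ : ℂ) :
    HasDerivAt (prim G) (G z₀) z₀ := by
  have hcont : Continuous G := hG.continuous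
  have hi1 : ∀ (a b y : ℝ), IntervalIntegrable (fun t : ℝ => G (↑t + ↑y * Complex.I)) volume a b :=
    fun a b y => (hcont.comp (by fun_prop)).intervalIntegrable a b
  have hi2 : ∀ (a b x : ℝ), IntervalIntegrable (fun t : ℝ => G (↑x + ↑t * Complex.I)) volume a b :=
    fun a b x => (hcont.comp (by fun_prop)).intervalIntegrable a b
  have hdiff : ∀ z : ℂ, prim G z - prim G z₀ =
      (∫ t : ℝ in z₀.re..z.re, G (↑t + ↑z.im * Complex.I)) +
        Complex.I * ∫ t : ℝ in z₀.im..z.im, G (↑z₀.re + ↑t * Complex.I) := by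
    intro z
    have hz : prim G z = prim G (↑z.re + ↑z.im * Complex.I) := by rw [Complex.re_add_im]
    have e1 : prim G (↑z.re + ↑z.im * Complex.I) - prim G (↑z₀.re + ↑z.im * Complex.I) =
        ∫ t : ℝ in z₀.re..z.re, G (↑t + ↑z.im * Complex.I) := by
      have r1 := prim_rect G hG z.re z.im
      have r2 := prim_rect G hG z₀.re z.im
      have hsub := intervalIntegral.integral_interval_sub_left (hi1 0 z.re z.im) (hi1 0 z₀.re z.im)
      rw [r1, r2]
      linear_combination hsub
    have e2 : prim G (↑z₀.re + ↑z.im * Complex.I) - prim G z₀ =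
        Complex.I * ∫ t : ℝ in z₀.im..z.im, G (↑z₀.re + ↑t * Complex.I) := by
      rw [prim, prim]
      simp only [Complex.add_re, Complex.add_im, Complex.ofReal_re, Complex.ofReal_im,
        Complex.mul_re, Complex.mul_im, Complex.I_re, Complex.I_im, mul_zero, mul_one,
        zero_add, sub_zero, zero_sub, neg_zero, add_zero, zero_mul]
      have hsub2 := intervalIntegral.integral_interval_sub_left (hi2 0 z.im z₀.re) (hi2 0 z₀.im z₀.re)
      linear_combination Complex.I * hsub2
    rw [hz]
    linear_combination e1 + e2
  rw [hasDerivAt_iff_isLittleO, Asymptotics.isLittleO_iff]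
  intro ε hε
  obtain ⟨δ, hδ, hball⟩ := Metric.continuousAt_iff.1 hcont.continuousAt (ε/2) (half_pos hε)
  filter_upwards [Metric.ball_mem_nhds z₀ (half_pos hδ)] with z hz
  have hdist : dist z z₀ < δ/2 := mem_ball.1 hz
  have hre : |z.re - z₀.re| ≤ ‖z - z₀‖ := by
    simpa [Complex.sub_re] using Complex.abs_re_le_norm (z - z₀)
  have him : |z.im - z₀.im| ≤ ‖z - z₀‖ := by
    simpa [Complex.sub_im] using Complex.abs_im_le_norm (z - z₀)
  have hnd : ‖z - z₀‖ < δ/2 := by rwa [dist_eq_norm] at hdist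
  -- rewrite the main expression
  have key : prim G z - prim G z₀ - (z - z₀) • G z₀ =
      (∫ t : ℝ in z₀.re..z.re, (G (↑t + ↑z.im * Complex.I) - G z₀)) +
        Complex.I * ∫ t : ℝ in z₀.im..z.im, (G (↑z₀.re + ↑t * Complex.I) - G z₀) := by
    rw [hdiff z, intervalIntegral.integral_sub (hi1 z₀.re z.re z.im)
        (intervalIntegrable_const),
      intervalIntegral.integral_sub (hi2 z₀.im z.im z₀.re) (intervalIntegrable_const)]
    simp only [intervalIntegral.integral_const, smul_eq_mul, Complex.real_smul]
    have : z - z₀ = ((z.re - z₀.re : ℝ) : ℂ) + ((z.im - z₀.im : ℝ) : ℂ) * Complex.I := by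
      simp [Complex.ext_iff]
    rw [this]
    ring
  rw [key]
  have hb1 : ‖∫ t : ℝ in z₀.re..z.re, (G (↑t + ↑z.im * Complex.I) - G z₀)‖ ≤
      (ε/2) * |z.re - z₀.re| := by
    apply intervalIntegral.norm_integral_le_of_norm_le_const
    intro t ht
    have ht' : |t - z₀.re| ≤ |z.re - z₀.re| := by
      rcases le_total z₀.re z.re with hc | hc
      · rw [Set.uIoc_of_le hc] at ht
        rw [_root_.abs_of_nonneg (by linarith [ht.1.le] : (0:ℝ) ≤ t - z₀.re),
          _root_.abs_of_nonneg (by linarith : (0:ℝ) ≤ z.re - z₀.re)]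
        linarith [ht.2]
      · rw [Set.uIoc_of_ge hc] at ht
        rw [_root_.abs_of_nonpos (by linarith [ht.2] : t - z₀.re ≤ 0),
          _root_.abs_of_nonpos (by linarith : z.re - z₀.re ≤ 0)]
        linarith [ht.1]
    have hw : dist (↑t + ↑z.im * Complex.I) z₀ < δ := by
      rw [Complex.dist_eq]
      calc ‖↑t + ↑z.im * Complex.I - z₀‖
          ≤ |(↑t + ↑z.im * Complex.I - z₀).re| + |(↑t + ↑z.im * Complex.I - z₀).im| :=
            Complex.norm_le_abs_re_add_abs_im _
        _ = |t - z₀.re| + |z.im - z₀.im| := by simp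
        _ < δ := by
            have := ht'.trans (hre.trans hnd.le)
            have := him.trans hnd.le
            linarith
    exact le_of_lt (by simpa [Complex.dist_eq] using hball hw)
  have hb2 : ‖∫ t : ℝ in z₀.im..z.im, (G (↑z₀.re + ↑t * Complex.I) - G z₀)‖ ≤
      (ε/2) * |z.im - z₀.im| := by
    apply intervalIntegral.norm_integral_le_of_norm_le_const
    intro t ht
    have ht' : |t - z₀.im| ≤ |z.im - z₀.im| := by
      rcases le_total z₀.im z.im with hc | hc
      · rw [Set.uIoc_of_le hc] at ht
        rw [_root_.abs_of_nonneg (by linarith [ht.1.le] : (0:ℝ) ≤ t - z₀.im),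
          _root_.abs_of_nonneg (by linarith : (0:ℝ) ≤ z.im - z₀.im)]
        linarith [ht.2]
      · rw [Set.uIoc_of_ge hc] at ht
        rw [_root_.abs_of_nonpos (by linarith [ht.2] : t - z₀.im ≤ 0),
          _root_.abs_of_nonpos (by linarith : z.im - z₀.im ≤ 0)]
        linarith [ht.1]
    have hw : dist (↑z₀.re + ↑t * Complex.I) z₀ < δ := by
      rw [Complex.dist_eq]
      calc ‖↑z₀.re + ↑t * Complex.I - z₀‖
          ≤ |(↑z₀.re + ↑t * Complex.I - z₀).re| + |(↑z₀.re + ↑t * Complex.I - z₀).im| :=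
            Complex.norm_le_abs_re_add_abs_im _
        _ = |z₀.re - z₀.re| + |t - z₀.im| := by simp
        _ < δ := by
            have := ht'.trans (him.trans hnd.le)
            simp only [sub_self, abs_zero, zero_add]
            linarith
    exact le_of_lt (by simpa [Complex.dist_eq] using hball hw)
  calc ‖(∫ t : ℝ in z₀.re..z.re, (G (↑t + ↑z.im * Complex.I) - G z₀)) +
        Complex.I * ∫ t : ℝ in z₀.im..z.im, (G (↑z₀.re + ↑t * Complex.I) - G z₀)‖
      ≤ ‖∫ t : ℝ in z₀.re..z.re, (G (↑t + ↑z.im * Complex.I) - G z₀)‖ +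
        ‖Complex.I * ∫ t : ℝ in z₀.im..z.im, (G (↑z₀.re + ↑t * Complex.I) - G z₀)‖ :=
        norm_add_le _ _
    _ ≤ (ε/2) * |z.re - z₀.re| + (ε/2) * |z.im - z₀.im| := by
        rw [norm_mul, Complex.norm_I, one_mul]
        exact add_le_add hb1 hb2
    _ ≤ ε * ‖z - z₀‖ := by nlinarith [norm_nonneg (z - z₀)]

lemma deriv_eq_zero_of_sublinear_growth {g : ℂ → ℂ} (hg : Differentiable ℂ g)
    (C₀ s R : ℝ) (hC₀ : 0 ≤ C₀) (hs0 : 0 ≤ s) (hs : s < 1) (hR : 0 < R)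
    (hbound : ∀ w : ℂ, R ≤ ‖w‖ → ‖g w‖ ≤ C₀ * ‖w‖ ^ s) (z : ℂ) : deriv g z = 0 := by
  rw [← norm_le_zero_iff]
  have key : ∀ r : ℝ, max (2*‖z‖) (2*R) ≤ r → ‖deriv g z‖ ≤ (C₀ * 2^s) * r^(s-1) := by
    intro r hr
    have hr1 : 2*‖z‖ ≤ r := le_trans (le_max_left _ _) hr
    have hr2 : 2*R ≤ r := le_trans (le_max_right _ _) hr
    have hr0 : 0 < r := by linarith
    have hC : ∀ w ∈ sphere z r, ‖g w‖ ≤ C₀ * (2*r)^s := by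
      intro w hw
      have hwz : ‖w - z‖ = r := by
        have := mem_sphere.1 hw
        rwa [dist_eq_norm] at this
      have h1 : ‖w‖ ≤ 2*r := by
        have h := norm_add_le z (w - z)
        simp only [add_sub_cancel] at h
        rw [hwz] at h
        linarith
      have h2 : R ≤ ‖w‖ := by
        have h := norm_sub_le w z
        rw [hwz] at h
        linarith
      calc ‖g w‖ ≤ C₀ * ‖w‖^s := hbound w h2
        _ ≤ C₀ * (2*r)^s :=
          mul_le_mul_of_nonneg_left (Real.rpow_le_rpow (norm_nonneg _) h1 hs0) hC₀
    have hest := Complex.norm_deriv_le_of_forall_mem_sphere_norm_le hr0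
      (hg.diffContOnCl) hC
    calc ‖deriv g z‖ ≤ C₀ * (2*r)^s / r := hest
      _ = (C₀ * 2^s) * r^(s-1) := by
          rw [Real.mul_rpow (by norm_num) hr0.le, Real.rpow_sub hr0, Real.rpow_one]
          ring
  have htend : Tendsto (fun r : ℝ => (C₀ * 2^s) * r^(s-1)) atTop (𝓝 0) := by
    have h2 : Tendsto (fun r : ℝ => r^(s-1)) atTop (𝓝 0) := by
      have := tendsto_rpow_neg_atTop (y := 1 - s) (by linarith)
      simpa [neg_sub] using this
    simpa using h2.const_mul (C₀ * 2^s)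
  exact ge_of_tendsto htend (eventually_atTop.2 ⟨max (2*‖z‖) (2*R), key⟩)

/-- An entire harmonic function on `ℂ` that is bounded below
by `-c·ln|z|` near infinity (with `c ≥ 0`) is constant. -/
theorem harmonic_const_of_log_lower_bound (h : ℂ → ℝ) (hh : HarmOn h Set.univ)
    (c R : ℝ) (hc : 0 ≤ c) (hR : 1 < R)
    (hlow : ∀ ζ : ℂ, R ≤ ‖ζ‖ → -c * Real.log ‖ζ‖ ≤ h ζ) :
    ∃ a : ℝ, ∀ ζ, h ζ = a := by
  have hsm : ContDiff ℝ (⊤ : ℕ∞) h := contDiffOn_univ.1 hh.1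
  have hlap : ∀ ζ, lapl h ζ = 0 := fun ζ => hh.2 ζ (Set.mem_univ ζ)
  set F := cgrad h with hFdef
  have hF : Differentiable ℂ F := cgrad_entire h hsm hlap
  set f := prim F with hfdef
  have hf : ∀ z, HasDerivAt f (F z) z := prim_hasDerivAt F hF
  -- the real part of f is h up to a constant
  have hFre : ∀ z, (F z).re = fderiv ℝ h z 1 := by
    intro z; simp [hFdef, cgrad]
  have hFim : ∀ z, (F z).im = -(fderiv ℝ h z Complex.I) := by
    intro z; simp [hFdef, cgrad]
  have hlin : ∀ z (w : ℂ), fderiv ℝ h z w = w.re * fderiv ℝ h z 1 + w.im * fderiv ℝ h z Complex.I := by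
    intro z w
    have hw : w = (w.re : ℝ) • (1:ℂ) + (w.im : ℝ) • Complex.I := by
      simp [Complex.real_smul, Complex.re_add_im]
    nth_rewrite 1 [hw]
    rw [map_add, _root_.map_smul, _root_.map_smul]
    simp [smul_eq_mul]
  have hφ : ∀ z : ℂ, HasFDerivAt (fun w => (f w).re - h w) (0 : ℂ →L[ℝ] ℝ) z := by
    intro z
    have h1 : HasFDerivAt f
        (((1 : ℂ →L[ℂ] ℂ).smulRight (F z)).restrictScalars ℝ) z :=
      ((hf z).hasFDerivAt).restrictScalars ℝ
    have h2 : HasFDerivAt (fun w => (f w).re)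
        (Complex.reCLM.comp (((1 : ℂ →L[ℂ] ℂ).smulRight (F z)).restrictScalars ℝ)) z :=
      Complex.reCLM.hasFDerivAt.comp z h1
    have h3 := h2.sub ((hsm.differentiable (by simp) z).hasFDerivAt)
    refine h3.congr_fderiv ?_
    apply ContinuousLinearMap.ext
    intro w
    simp only [ContinuousLinearMap.zero_apply, ContinuousLinearMap.sub_apply,
      ContinuousLinearMap.comp_apply, ContinuousLinearMap.coe_restrictScalars',
      ContinuousLinearMap.smulRight_apply, ContinuousLinearMap.one_apply,
      Complex.reCLM_apply, smul_eq_mul]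
    rw [Complex.mul_re, hFre z, hFim z, hlin z w]
    ring
  have hdiffφ : Differentiable ℝ (fun w => (f w).re - h w) := fun z => (hφ z).differentiableAt
  have hK : ∀ z, (f z).re - h z = (f 0).re - h 0 := fun z =>
    is_const_of_fderiv_eq_zero hdiffφ (fun z => (hφ z).fderiv) z 0
  set K := (f 0).re - h 0 with hKdef
  -- the exponential of a small multiple of -f
  set t : ℝ := 1/(c+1) with htdef
  have ht0 : 0 < t := by positivity
  set s : ℝ := c/(c+1) with hsdef
  have hs0 : 0 ≤ s := by positivity
  have hs1 : s < 1 := by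
    rw [hsdef, div_lt_one (by linarith)]; linarith
  have hfdiff : Differentiable ℂ f := fun z => (hf z).differentiableAt
  set g : ℂ → ℂ := fun z => Complex.exp (-(t:ℂ) * f z) with hgdef
  have hg : Differentiable ℂ g := (hfdiff.const_mul (-(t:ℂ))).cexp
  have hgnorm : ∀ z, ‖g z‖ = Real.exp (-(t * (h z + K))) := by
    intro z
    rw [hgdef]
    simp only [Complex.norm_exp]
    congr 1
    have hre : (f z).re = h z + K := by have := hK z; linarith
    simp [Complex.mul_re, hre]
  have hts : t * c = s := by rw [htdef, hsdef]; ring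
  have hbound : ∀ w : ℂ, R ≤ ‖w‖ → ‖g w‖ ≤ Real.exp (-(t*K)) * ‖w‖ ^ s := by
    intro w hw
    have hw1 : 1 < ‖w‖ := lt_of_lt_of_le hR hw
    have hlog : 0 ≤ Real.log ‖w‖ := Real.log_nonneg hw1.le
    have hh1 : -c * Real.log ‖w‖ ≤ h w := hlow w hw
    rw [hgnorm w]
    have hle : -(t * (h w + K)) ≤ t * c * Real.log ‖w‖ + (-(t*K)) := by nlinarith [ht0.le]
    calc Real.exp (-(t * (h w + K)))
        ≤ Real.exp (t * c * Real.log ‖w‖ + (-(t*K))) := Real.exp_le_exp.2 hle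
      _ = Real.exp (-(t*K)) * ‖w‖ ^ s := by
          rw [Real.exp_add, Real.rpow_def_of_pos (by linarith : (0:ℝ) < ‖w‖), ← hts]
          ring_nf
  have hFzero : ∀ z, F z = 0 := by
    intro z
    have hder : deriv g z = 0 := deriv_eq_zero_of_sublinear_growth hg
      (Real.exp (-(t*K))) s R (Real.exp_nonneg _) hs0 hs1 (by linarith) hbound z
    have hD : HasDerivAt g (Complex.exp (-(t:ℂ) * f z) * (-(t:ℂ) * F z)) z :=
      ((hf z).const_mul (-(t:ℂ))).cexp
    have heq := hD.deriv
    rw [hder] at heq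
    have hexp := Complex.exp_ne_zero (-(t:ℂ) * f z)
    have ht' : (-(t:ℂ)) ≠ 0 := by
      simp only [neg_ne_zero, Ne, Complex.ofReal_eq_zero]
      exact_mod_cast ne_of_gt ht0
    rcases mul_eq_zero.1 heq.symm with h1 | h1
    · exact absurd h1 hexp
    · rcases mul_eq_zero.1 h1 with h2 | h2
      · exact absurd h2 ht'
      · exact h2
  have hfd : ∀ z, fderiv ℝ h z = 0 := by
    intro z
    have h0 := hFzero z
    have h1 : fderiv ℝ h z 1 = 0 := by
      have := congrArg Complex.re h0
      rw [hFre z] at this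
      simpa using this
    have h2 : fderiv ℝ h z Complex.I = 0 := by
      have := congrArg Complex.im h0
      rw [hFim z] at this
      simpa using this
    apply ContinuousLinearMap.ext
    intro w
    rw [hlin z w, h1, h2]
    simp
  exact ⟨h 0, fun ζ => is_const_of_fderiv_eq_zero (hsm.differentiable (by simp)) hfd ζ 0⟩
end
end
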